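/- Let X and Y be real random variables with E[X⁺] < ∞ and E[Y⁺] < ∞. Then X ≤_icx Y (i.e. E[(X−x)⁺] ≤ E[(Y−x)⁺] for all x ∈ ℝ) if and only if iqf_X(u) − E[X⁺] ≥ iqf_Y(u) − E[Y⁺] for all u ∈ [0,1]. -/

import Mathlib

open MeasureTheory Filter Set

noncomputable def cdf {Ω : Type*} [MeasurableSpace Ω] (P : Measure Ω) (X : Ω → ℝ) : ℝ → ℝ :=
  fun x => (P {ω | X ω ≤ x}).toReal

noncomputable def idf {Ω : Type*} [MeasurableSpace Ω] (P : Measure Ω) (X : Ω → ℝ) : ℝ → ℝ :=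
  fun x => ∫ t in (0:ℝ)..x, cdf P X t

section aux
variable {Ω : Type*} [MeasurableSpace Ω] (P : Measure Ω) [IsProbabilityMeasure P] (X : Ω → ℝ)

lemma cdf_mono : Monotone (cdf P X) := fun a b hab =>
  ENNReal.toReal_mono (measure_ne_top _ _) (measure_mono fun ω h => le_trans h hab)

lemma cdf_nonneg (x : ℝ) : 0 ≤ cdf P X x := ENNReal.toReal_nonneg

lemma cdf_le_one (x : ℝ) : cdf P X x ≤ 1 := by
  rw [cdf, ← ENNReal.toReal_one]
  exact ENNReal.toReal_mono ENNReal.one_ne_top prob_le_one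

lemma vol_aux (a b c : ℝ) (hab : a ≤ b) :
    (volume (Ioc a b ∩ Ici c)).toReal = b - min (max c a) b := by
  rcases le_or_gt c a with h | h
  · have he : Ioc a b ∩ Ici c = Ioc a b := by
      ext t
      simp only [mem_inter_iff, mem_Ioc, mem_Ici, and_iff_left_iff_imp]
      rintro ⟨h1, _⟩; linarith
    rw [he, Real.volume_Ioc, ENNReal.toReal_ofReal (by linarith), max_eq_right h, min_eq_left hab]
  · rcases le_or_gt c b with h2 | h2
    · have he : Ioc a b ∩ Ici c = Icc c b := by
        ext t; constructor
        · rintro ⟨⟨_, h1⟩, h3⟩; exact ⟨h3, h1⟩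
        · rintro ⟨h3, h4⟩; exact ⟨⟨lt_of_lt_of_le h h3, h4⟩, h3⟩
      rw [he, Real.volume_Icc, ENNReal.toReal_ofReal (by linarith),
        max_eq_left h.le, min_eq_left h2]
    · have he : Ioc a b ∩ Ici c = ∅ := by
        ext t; simp only [mem_inter_iff, mem_Ioc, mem_Ici, mem_empty_iff_false, iff_false]
        rintro ⟨⟨_, h1⟩, h3⟩; linarith
      rw [he, measure_empty, ENNReal.toReal_zero,
        min_eq_right (le_trans h2.le (le_max_left _ _)), sub_self]

lemma key_fubini {a b : ℝ} (hab : a ≤ b) (hX : Measurable X) :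
    ∫ t in Set.Ioc a b, cdf P X t = ∫ ω, (b - min (max (X ω) a) b) ∂P := by
  have hfin : IsFiniteMeasure (volume.restrict (Ioc a b)) :=
    ⟨by rw [Measure.restrict_apply_univ, Real.volume_Ioc]; exact ENNReal.ofReal_lt_top⟩
  have hs : MeasurableSet {p : ℝ × Ω | X p.2 ≤ p.1} :=
    measurableSet_le (hX.comp measurable_snd) measurable_fst
  have hint : Integrable (Function.uncurry fun (t : ℝ) (ω : Ω) =>
      ({ω' | X ω' ≤ t}.indicator (fun _ => (1:ℝ)) ω)) ((volume.restrict (Ioc a b)).prod P) := by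
    have : (Function.uncurry fun (t : ℝ) (ω : Ω) =>
        ({ω' | X ω' ≤ t}.indicator (fun _ => (1:ℝ)) ω)) =
        {p : ℝ × Ω | X p.2 ≤ p.1}.indicator (fun _ => (1:ℝ)) := by
      ext ⟨t, ω⟩
      simp only [Function.uncurry, Set.indicator_apply, mem_setOf_eq]
    rw [this]
    exact (integrable_const 1).indicator hs
  have step1 : ∫ t in Set.Ioc a b, cdf P X t =
      ∫ t in Set.Ioc a b, ∫ ω, ({ω' | X ω' ≤ t}.indicator (fun _ => (1:ℝ)) ω) ∂P := by
    refine integral_congr_ae (Filter.Eventually.of_forall fun t => ?_)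
    exact (integral_indicator_one (s := {ω' | X ω' ≤ t}) (hX measurableSet_Iic)).symm
  rw [step1, MeasureTheory.integral_integral_swap hint]
  refine integral_congr_ae (Filter.Eventually.of_forall fun ω => ?_)
  have h1 : ∀ t : ℝ, ({ω' | X ω' ≤ t}.indicator (fun _ => (1:ℝ)) ω) =
      (Ici (X ω)).indicator (fun _ => (1:ℝ)) t := by
    intro t
    simp only [Set.indicator_apply, mem_setOf_eq, mem_Ici]
  show ∫ t in Ioc a b, ({ω' | X ω' ≤ t}.indicator (fun _ => (1:ℝ)) ω) = _
  simp only [h1]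
  rw [setIntegral_indicator measurableSet_Ici, setIntegral_const, smul_eq_mul, mul_one,
    measureReal_def, vol_aux a b (X ω) hab]

lemma ptwise_nonneg {x : ℝ} (hx : 0 ≤ x) (a : ℝ) :
    max (a - x) 0 - max a 0 = -(min (max a 0) x) := by
  rcases le_total a 0 with h | h
  · rw [max_eq_right h, max_eq_right (by linarith : a - x ≤ 0), min_eq_left hx]
    ring
  · rw [max_eq_left h]
    rcases le_total a x with h2 | h2
    · rw [max_eq_right (by linarith : a - x ≤ 0), min_eq_left h2]; ring
    · rw [max_eq_left (by linarith : (0:ℝ) ≤ a - x), min_eq_right h2]; ring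

lemma ptwise_nonpos {x : ℝ} (hx : x ≤ 0) (a : ℝ) :
    max (a - x) 0 - max a 0 = min (max a x) 0 - x := by
  rcases le_total a x with h | h
  · rw [max_eq_right (by linarith : a - x ≤ 0), max_eq_right h,
      max_eq_right (le_trans h hx), min_eq_left hx]; ring
  · rw [max_eq_left h, max_eq_left (by linarith : (0:ℝ) ≤ a - x)]
    rcases le_total a 0 with h2 | h2
    · rw [max_eq_right h2, min_eq_left h2]; ring
    · rw [max_eq_left h2, min_eq_right h2]; ring

lemma clamp_integrable (a b : ℝ) (hX : Measurable X) :
    Integrable (fun ω => min (max (X ω) a) b) P := by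
  refine Integrable.mono' (integrable_const (max |a| |b|)) ?_
    (Filter.Eventually.of_forall fun ω => ?_)
  · exact ((hX.max measurable_const).min measurable_const).aestronglyMeasurable
  · rw [Real.norm_eq_abs, abs_le]
    constructor
    · have h1 : min a b ≤ min (max (X ω) a) b := min_le_min (le_max_right _ _) le_rfl
      have h2 : -(max |a| |b|) ≤ min a b :=
        le_min (le_trans (neg_le_neg (le_max_left |a| |b|)) (neg_abs_le a))
          (le_trans (neg_le_neg (le_max_right |a| |b|)) (neg_abs_le b))
      linarith
    · exact le_trans (min_le_right _ _) (le_trans (le_abs_self b) (le_max_right _ _))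

lemma stoploss (hX : Measurable X) (hXp : Integrable (fun ω => max (X ω) 0) P) (x : ℝ) :
    ∫ ω, max (X ω - x) 0 ∂P = (∫ ω, max (X ω) 0 ∂P) - x + idf P X x := by
  have hSLx : Integrable (fun ω => max (X ω - x) 0) P := by
    refine Integrable.mono' (hXp.add (integrable_const |x|)) ?_
      (Filter.Eventually.of_forall fun ω => ?_)
    · exact ((hX.sub measurable_const).max measurable_const).aestronglyMeasurable
    · rw [Real.norm_eq_abs, abs_of_nonneg (le_max_right _ _)]
      have h1 : X ω - x ≤ max (X ω) 0 + |x| := by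
        have := le_max_left (X ω) 0
        have := neg_abs_le x
        linarith
      have h2 : (0:ℝ) ≤ max (X ω) 0 + |x| := add_nonneg (le_max_right _ _) (abs_nonneg x)
      exact max_le h1 h2
  rcases le_total 0 x with hx | hx
  · have hf := key_fubini P X hx hX
    have hidf : idf P X x = x - ∫ ω, min (max (X ω) 0) x ∂P := by
      rw [idf, intervalIntegral.integral_of_le hx, hf,
        integral_sub (integrable_const x) (clamp_integrable P X 0 x hX),
        integral_const, probReal_univ, one_smul]
    have hdiff : ∫ ω, max (X ω - x) 0 ∂P - ∫ ω, max (X ω) 0 ∂P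
        = - ∫ ω, min (max (X ω) 0) x ∂P := by
      rw [← integral_sub hSLx hXp, ← integral_neg]
      refine integral_congr_ae (Filter.Eventually.of_forall fun ω => ?_)
      exact ptwise_nonneg hx (X ω)
    rw [hidf]; linarith
  · have hf := key_fubini P X hx hX
    have hidf : idf P X x = ∫ ω, min (max (X ω) x) 0 ∂P := by
      rw [idf, intervalIntegral.integral_symm, intervalIntegral.integral_of_le hx, hf,
        integral_sub (integrable_const 0) (clamp_integrable P X x 0 hX),
        integral_const, probReal_univ, one_smul]
      simp
    have hdiff : ∫ ω, max (X ω - x) 0 ∂P - ∫ ω, max (X ω) 0 ∂P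
        = (∫ ω, min (max (X ω) x) 0 ∂P) - x := by
      rw [← integral_sub hSLx hXp]
      have : ∫ ω, (max (X ω - x) 0 - max (X ω) 0) ∂P
          = ∫ ω, (min (max (X ω) x) 0 - x) ∂P :=
        integral_congr_ae (Filter.Eventually.of_forall fun ω => ptwise_nonpos hx (X ω))
      rw [this, integral_sub (clamp_integrable P X x 0 hX) (integrable_const x),
        integral_const, probReal_univ, one_smul]
    rw [hidf]; linarith

lemma idf_subgrad (x y : ℝ) : idf P X x + cdf P X x * (y - x) ≤ idf P X y := by
  have hint : ∀ a b : ℝ, IntervalIntegrable (cdf P X) volume a b := fun a b =>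
    (cdf_mono P X).intervalIntegrable
  have hxy : idf P X y = idf P X x + ∫ t in x..y, cdf P X t := by
    rw [idf, idf, ← intervalIntegral.integral_add_adjacent_intervals (hint 0 x) (hint x y)]
  have hb : cdf P X x * (y - x) ≤ ∫ t in x..y, cdf P X t := by
    rcases le_total x y with h | h
    · have : ∫ t in x..y, cdf P X x ≤ ∫ t in x..y, cdf P X t :=
        intervalIntegral.integral_mono_on h (intervalIntegrable_const) (hint x y)
          (fun t ht => cdf_mono P X ht.1)
      rwa [intervalIntegral.integral_const, smul_eq_mul, mul_comm] at this
    · have : ∫ t in y..x, cdf P X t ≤ ∫ t in y..x, cdf P X x :=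
        intervalIntegral.integral_mono_on h (hint y x) (intervalIntegrable_const)
          (fun t ht => cdf_mono P X ht.2)
      rw [intervalIntegral.integral_const, smul_eq_mul, mul_comm] at this
      rw [intervalIntegral.integral_symm]
      linarith
  linarith

end aux

noncomputable def iqf {Ω : Type*} [MeasurableSpace Ω] (P : Measure Ω) (X : Ω → ℝ) : ℝ → EReal :=
  fun u => ⨆ x : ℝ, ((x * u - idf P X x : ℝ) : EReal)

section aux2
variable {Ω : Type*} [MeasurableSpace Ω] (P : Measure Ω) [IsProbabilityMeasure P] (X : Ω → ℝ)

lemma le_iqf (u x : ℝ) : ((x * u - idf P X x : ℝ) : EReal) ≤ iqf P X u := by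
  unfold iqf; exact le_iSup (fun y : ℝ => ((y * u - idf P X y : ℝ) : EReal)) x

lemma iqf_le {u : ℝ} {c : EReal} (h : ∀ y : ℝ, ((y * u - idf P X y : ℝ) : EReal) ≤ c) :
    iqf P X u ≤ c := by
  unfold iqf; exact iSup_le h

lemma iqf_attain (x : ℝ) :
    iqf P X (cdf P X x) = ((x * cdf P X x - idf P X x : ℝ) : EReal) := by
  refine le_antisymm (iqf_le P X fun y => EReal.coe_le_coe_iff.2 ?_) (le_iqf P X _ x)
  have := idf_subgrad P X x y
  nlinarith [this]

end aux2

theorem stmt14 {Ω₁ Ω₂ : Type*} [MeasurableSpace Ω₁] [MeasurableSpace Ω₂]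
    (P : Measure Ω₁) [IsProbabilityMeasure P] (Q : Measure Ω₂) [IsProbabilityMeasure Q]
    (X : Ω₁ → ℝ) (Y : Ω₂ → ℝ) (hX : Measurable X) (hY : Measurable Y)
    (hXp : Integrable (fun ω => max (X ω) 0) P)
    (hYp : Integrable (fun ω => max (Y ω) 0) Q) :
    (∀ x : ℝ, ∫ ω, max (X ω - x) 0 ∂P ≤ ∫ ω, max (Y ω - x) 0 ∂Q) ↔
    (∀ u ∈ Set.Icc (0:ℝ) 1,
      iqf Q Y u - ((∫ ω, max (Y ω) 0 ∂Q : ℝ) : EReal)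
        ≤ iqf P X u - ((∫ ω, max (X ω) 0 ∂P : ℝ) : EReal)) := by
  set EX : ℝ := ∫ ω, max (X ω) 0 ∂P with hEX
  set EY : ℝ := ∫ ω, max (Y ω) 0 ∂Q with hEY
  constructor
  · intro h u _
    have hpt : ∀ y : ℝ, y * u - idf Q Y y - EY ≤ y * u - idf P X y - EX := by
      intro y
      have h1 := stoploss P X hX hXp y
      have h2 := stoploss Q Y hY hYp y
      have h3 := h y
      rw [h1, h2] at h3
      linarith
    have h1 : iqf Q Y u ≤ (iqf P X u - (EX : EReal)) + (EY : EReal) := by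
      refine iqf_le Q Y fun y => ?_
      calc ((y * u - idf Q Y y : ℝ) : EReal)
          ≤ ((y * u - idf P X y - EX + EY : ℝ) : EReal) :=
            EReal.coe_le_coe_iff.2 (by have := hpt y; linarith)
        _ = (((y * u - idf P X y : ℝ) : EReal) - (EX : EReal)) + (EY : EReal) := by
            norm_cast
        _ ≤ (iqf P X u - (EX : EReal)) + (EY : EReal) := by
            exact add_le_add_left (EReal.sub_le_sub (le_iqf P X u y) le_rfl) _
    calc iqf Q Y u - (EY : EReal)
        ≤ ((iqf P X u - (EX : EReal)) + (EY : EReal)) - (EY : EReal) :=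
          EReal.sub_le_sub h1 le_rfl
      _ = iqf P X u - (EX : EReal) := EReal.add_sub_cancel_right
  · intro h x
    set u₀ : ℝ := cdf P X x with hu₀
    have hmem : u₀ ∈ Set.Icc (0:ℝ) 1 := ⟨cdf_nonneg P X x, cdf_le_one P X x⟩
    have hh := h u₀ hmem
    rw [iqf_attain P X x, ← hu₀] at hh
    have hle : ((x * u₀ - idf Q Y x - EY : ℝ) : EReal)
        ≤ ((x * u₀ - idf P X x - EX : ℝ) : EReal) := by
      calc ((x * u₀ - idf Q Y x - EY : ℝ) : EReal)
          = ((x * u₀ - idf Q Y x : ℝ) : EReal) - (EY : EReal) := by norm_cast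
        _ ≤ iqf Q Y u₀ - (EY : EReal) := EReal.sub_le_sub (le_iqf Q Y u₀ x) le_rfl
        _ ≤ ((x * u₀ - idf P X x : ℝ) : EReal) - (EX : EReal) := hh
        _ = ((x * u₀ - idf P X x - EX : ℝ) : EReal) := by norm_cast
    have hre : x * u₀ - idf Q Y x - EY ≤ x * u₀ - idf P X x - EX :=
      EReal.coe_le_coe_iff.1 hle
    rw [stoploss P X hX hXp x, stoploss Q Y hY hYp x]
    linarith
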